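/- arXiv:1807.07873 — 5 statements merged into one kernel-verified Lean document; each statement's English description precedes it below -/
import Mathlib

section
/- Let a, γ̄_b > 0 and define g(R_b) = exp(−(2^{R_b} − 1)/γ̄_b)·log₂(1 + a·2^{R_b}) for R_b ∈ ℝ. Then g'(R_b) = 0 if and only if 2^{R_b} = (exp(W₀(a·γ̄_b)) − 1)/a, where W₀ is the principal branch of the Lambert W function; that is, R_b = log₂((exp(W₀(a·γ̄_b)) − 1)/a) is the unique stationary point of g. -/
open Real

lemma aux_mul_exp_inj {u v : ℝ} (hu : 0 ≤ u) (hv : 0 ≤ v)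
    (h : u * Real.exp u = v * Real.exp v) : u = v := by
  rcases lt_trichotomy u v with hlt | he | hlt
  · exfalso
    have h1 : u * Real.exp u ≤ u * Real.exp v :=
      mul_le_mul_of_nonneg_left (Real.exp_le_exp.2 hlt.le) hu
    have h2 : u * Real.exp v < v * Real.exp v :=
      mul_lt_mul_of_pos_right hlt (Real.exp_pos v)
    linarith
  · exact he
  · exfalso
    have h1 : v * Real.exp v ≤ v * Real.exp u :=
      mul_le_mul_of_nonneg_left (Real.exp_le_exp.2 hlt.le) hv
    have h2 : v * Real.exp u < u * Real.exp u :=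
      mul_lt_mul_of_pos_right hlt (Real.exp_pos u)
    linarith

/-- For `g(R_b) = exp(-(2^{R_b}-1)/γ̄_b) log₂(1 + a 2^{R_b})` with `a, γ̄_b > 0`,
the stationary points are exactly `2^{R_b} = (e^{W₀(a γ̄_b)} - 1)/a`, where `W₀` is the
principal branch of the Lambert W function (characterized by `w ≥ 0`, `w e^w = a γ̄_b`). -/
theorem stmt_5 (a γb : ℝ) (ha : 0 < a) (hγb : 0 < γb)
    (w : ℝ) (hw0 : 0 ≤ w) (hw : w * Real.exp w = a * γb)
    (g : ℝ → ℝ)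
    (hg : ∀ x, g x = Real.exp (-((2 : ℝ) ^ x - 1) / γb) * Real.logb 2 (1 + a * (2 : ℝ) ^ x)) :
    ∀ Rb : ℝ, deriv g Rb = 0 ↔ (2 : ℝ) ^ Rb = (Real.exp w - 1) / a := by
  intro Rb
  set t : ℝ := (2 : ℝ) ^ Rb with hts
  have ht : 0 < t := Real.rpow_pos_of_pos (by norm_num) Rb
  have hat : 0 < 1 + a * t := by positivity
  have hlog2 : Real.log 2 ≠ 0 := by
    have : (1 : ℝ) < 2 := one_lt_two
    exact ne_of_gt (Real.log_pos this)
  -- derivative of 2^x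
  have hpow : ∀ x : ℝ, HasDerivAt (fun y => (2 : ℝ) ^ y) ((2 : ℝ) ^ x * Real.log 2) x :=
    fun x => (Real.hasStrictDerivAt_const_rpow (by norm_num) x).hasDerivAt
  -- f = exp part
  have hf : HasDerivAt (fun x => Real.exp (-((2 : ℝ) ^ x - 1) / γb))
      (Real.exp (-(t - 1) / γb) * (-(t * Real.log 2) / γb)) Rb := by
    have h1 : HasDerivAt (fun x => -((2 : ℝ) ^ x - 1) / γb) (-(t * Real.log 2) / γb) Rb := by
      have := ((hpow Rb).sub_const 1).neg.div_const γb
      simpa using this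
    simpa using h1.exp
  -- inner of log
  have hinner : HasDerivAt (fun x => 1 + a * (2 : ℝ) ^ x) (a * (t * Real.log 2)) Rb := by
    have := ((hpow Rb).const_mul a).const_add 1
    simpa [mul_assoc] using this
  have hG : HasDerivAt (fun x => Real.logb 2 (1 + a * (2 : ℝ) ^ x))
      (a * (t * Real.log 2) / (1 + a * t) / Real.log 2) Rb := by
    have hlg : HasDerivAt (fun x => Real.log (1 + a * (2 : ℝ) ^ x))
        (a * (t * Real.log 2) / (1 + a * t)) Rb := hinner.log (ne_of_gt hat)
    have := hlg.div_const (Real.log 2)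
    simpa [Real.logb, div_eq_mul_inv] using this
  have hgd : HasDerivAt g
      (Real.exp (-(t - 1) / γb) * (-(t * Real.log 2) / γb) * Real.logb 2 (1 + a * t)
        + Real.exp (-(t - 1) / γb) * (a * (t * Real.log 2) / (1 + a * t) / Real.log 2)) Rb := by
    have := hf.mul hG
    have hfunext : g = fun x => Real.exp (-((2 : ℝ) ^ x - 1) / γb) *
        Real.logb 2 (1 + a * (2 : ℝ) ^ x) := funext hg
    rw [hfunext]
    exact this
  rw [hgd.deriv]
  -- simplify: deriv = exp(..) * t * (a/(1+at) - log(1+at)/γb)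
  have key : Real.exp (-(t - 1) / γb) * (-(t * Real.log 2) / γb) * Real.logb 2 (1 + a * t)
        + Real.exp (-(t - 1) / γb) * (a * (t * Real.log 2) / (1 + a * t) / Real.log 2)
      = Real.exp (-(t - 1) / γb) * t *
        (a / (1 + a * t) - Real.log (1 + a * t) / γb) := by
    rw [Real.logb]
    field_simp
    ring
  rw [key]
  have hexp : Real.exp (-(t - 1) / γb) * t ≠ 0 := by positivity
  rw [mul_eq_zero]
  have hwpos : 0 < w := by
    rcases hw0.lt_or_eq with h | h
    · exact h
    · exfalso; rw [← h] at hw; simp at hw; rcases hw with h2 | h2 <;> linarith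
  constructor
  · rintro (h | h)
    · exact absurd h hexp
    · -- a/(1+at) = log(1+at)/γb  →  (1+at) log(1+at) = aγb
      have hcond : (1 + a * t) * Real.log (1 + a * t) = a * γb := by
        have h' : a / (1 + a * t) = Real.log (1 + a * t) / γb := by linarith
        field_simp at h'
        linarith
      set u := Real.log (1 + a * t) with hu
      have hupos : 0 < u := Real.log_pos (by nlinarith)
      have heu : Real.exp u = 1 + a * t := Real.exp_log hat
      have huw : u * Real.exp u = w * Real.exp w := by
        rw [heu, hw]; linarith [hcond]
      have : u = w := aux_mul_exp_inj hupos.le hw0 huw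
      have : Real.exp w = 1 + a * t := by rw [← this, heu]
      field_simp
      linarith
  · intro h
    right
    have hew : Real.exp w = 1 + a * t := by
      have : a * t = Real.exp w - 1 := by
        rw [h]; field_simp
      linarith
    have hlw : Real.log (1 + a * t) = w := by rw [← hew, Real.log_exp]
    rw [hlw]
    have : (1 + a * t) * w = a * γb := by rw [← hew]; linarith [hw]
    field_simp
    nlinarith [hat]
end

section
/- For γ̄_b > 0 and 0 < Γ < max_{x≥0} x·exp((1 − 2^x)/γ̄_b), the equation x·exp((1 − 2^x)/γ̄_b) = Γ has exactly two solutions x_min < x_max in (0, ∞). -/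
/-!
The derivative of `f x = x exp((1 - 2^x)/γ̄_b)` has the sign of `γ̄_b - log 2 · x 2^x`, and
`x ↦ x 2^x` increases strictly from `0` to `∞` on `[0, ∞)`. Hence `f` increases strictly up to
the peak `m` with `log 2 · m 2^m = γ̄_b` (that is, `m = W₀(γ̄_b)/ln 2`) and decreases strictly after
it, tending to `0` because `2^x ≥ 1 + x log 2`. As `f 0 = 0`, every level strictly between `0`
and the maximum `f m` is attained exactly once on each side of `m`.
-/

open Real Filter Set Topology

theorem exists_two_eq_of_strictMonoOn_of_strictAntiOn {f : ℝ → ℝ} {m c : ℝ}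
    (hf : ContinuousOn f (Ici 0)) (hm : 0 ≤ m) (hmono : StrictMonoOn f (Icc 0 m))
    (hanti : StrictAntiOn f (Ici m)) (h0 : f 0 < c) (hc : c < f m)
    (htop : ∀ᶠ x in atTop, f x < c) :
    ∃ a b, 0 < a ∧ a < b ∧ f a = c ∧ f b = c ∧ ∀ x, 0 ≤ x → f x = c → x = a ∨ x = b := by
  obtain ⟨a, ⟨ha0, ham⟩, hfa⟩ :=
    intermediate_value_Ioo hm (hf.mono Icc_subset_Ici_self) ⟨h0, hc⟩
  obtain ⟨n, hn, hmn⟩ := (htop.and (eventually_gt_atTop m)).exists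
  obtain ⟨b, ⟨hmb, -⟩, hfb⟩ :=
    intermediate_value_Ioo' hmn.le (hf.mono fun x hx => hm.trans hx.1) ⟨hn, hc⟩
  refine ⟨a, b, ha0, ham.trans hmb, hfa, hfb, fun x hx hfx => ?_⟩
  rcases le_total x m with hxm | hmx
  · exact .inl (hmono.injOn ⟨hx, hxm⟩ ⟨ha0.le, ham.le⟩ (hfx.trans hfa.symm))
  · exact .inr (hanti.injOn hmx (mem_Ici.2 hmb.le) (hfx.trans hfb.symm))

theorem isGreatest_of_monotoneOn_of_antitoneOn {f : ℝ → ℝ} {m : ℝ} (hm : 0 ≤ m)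
    (hmono : MonotoneOn f (Icc 0 m)) (hanti : AntitoneOn f (Ici m)) :
    IsGreatest {y | ∃ x, 0 ≤ x ∧ y = f x} (f m) := by
  refine ⟨⟨m, hm, rfl⟩, ?_⟩
  rintro _ ⟨x, hx, rfl⟩
  rcases le_total x m with hxm | hmx
  · exact hmono ⟨hx, hxm⟩ ⟨hm, le_rfl⟩ hxm
  · exact hanti self_mem_Ici hmx hmx

theorem strictMonoOn_mul_rpow {a : ℝ} (ha : 1 ≤ a) :
    StrictMonoOn (fun x : ℝ => x * a ^ x) (Ici 0) := by
  intro x hx y _ hxy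
  calc x * a ^ x ≤ x * a ^ y :=
        mul_le_mul_of_nonneg_left (rpow_le_rpow_of_exponent_le ha hxy.le) hx
    _ < y * a ^ y := mul_lt_mul_of_pos_right hxy (rpow_pos_of_pos (by linarith) y)

noncomputable def throughput (γ x : ℝ) : ℝ := x * exp ((1 - (2 : ℝ) ^ x) / γ)

theorem hasDerivAt_throughput (γ x : ℝ) :
    HasDerivAt (throughput γ) (exp ((1 - (2 : ℝ) ^ x) / γ) * (1 - log 2 * (x * 2 ^ x) / γ)) x := by
  have h2 : HasDerivAt (fun x : ℝ => (2 : ℝ) ^ x) (log 2 * 1 * 2 ^ x) x :=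
    (hasDerivAt_id x).const_rpow two_pos
  refine ((hasDerivAt_id' x).mul ((h2.const_sub 1).div_const γ).exp).congr_deriv ?_
  ring

theorem continuous_throughput (γ : ℝ) : Continuous (throughput γ) :=
  continuous_iff_continuousAt.2 fun x => (hasDerivAt_throughput γ x).continuousAt

theorem exists_pos_log_two_mul_mul_two_rpow_eq {γ : ℝ} (hγ : 0 < γ) :
    ∃ m, 0 < m ∧ log 2 * (m * 2 ^ m) = γ := by
  have hlog : 0 < log 2 := log_pos one_lt_two
  have hcont : Continuous fun x : ℝ => log 2 * (x * (2 : ℝ) ^ x) :=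
    continuous_const.mul
      (continuous_id.mul (continuous_const.rpow continuous_id fun _ => .inl two_ne_zero))
  have hB : 0 ≤ γ / log 2 := by positivity
  have hγB : γ ≤ log 2 * (γ / log 2 * 2 ^ (γ / log 2)) := by
    rw [← mul_assoc, mul_div_cancel₀ _ hlog.ne']
    exact le_mul_of_one_le_right hγ.le (one_le_rpow one_le_two hB)
  obtain ⟨m, hm, hmγ⟩ :=
    intermediate_value_Icc hB hcont.continuousOn ⟨by simpa using hγ.le, hγB⟩
  refine ⟨m, hm.1.lt_of_ne ?_, hmγ⟩
  rintro rfl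
  simp [hγ.ne] at hmγ

theorem strictMonoOn_throughput {γ m : ℝ} (hγ : 0 < γ) (hpeak : log 2 * (m * 2 ^ m) = γ) :
    StrictMonoOn (throughput γ) (Icc 0 m) := by
  refine strictMonoOn_of_deriv_pos (convex_Icc 0 m) (continuous_throughput γ).continuousOn
    fun x hx => ?_
  rw [interior_Icc] at hx
  have hx_lt : log 2 * (x * 2 ^ x) < γ := by
    rw [← hpeak]
    exact mul_lt_mul_of_pos_left (strictMonoOn_mul_rpow one_le_two (mem_Ici.2 hx.1.le)
      (mem_Ici.2 (hx.1.trans hx.2).le) hx.2) (log_pos one_lt_two)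
  rw [(hasDerivAt_throughput γ x).deriv]
  exact mul_pos (exp_pos _) (sub_pos.2 ((div_lt_one hγ).2 hx_lt))

theorem strictAntiOn_throughput {γ m : ℝ} (hγ : 0 < γ) (hpeak : log 2 * (m * 2 ^ m) = γ)
    (hm : 0 ≤ m) : StrictAntiOn (throughput γ) (Ici m) := by
  refine strictAntiOn_of_deriv_neg (convex_Ici m) (continuous_throughput γ).continuousOn
    fun x hx => ?_
  rw [interior_Ici] at hx
  have hx_gt : γ < log 2 * (x * 2 ^ x) := by
    rw [← hpeak]
    exact mul_lt_mul_of_pos_left (strictMonoOn_mul_rpow one_le_two (mem_Ici.2 hm)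
      (mem_Ici.2 (hm.trans hx.le)) hx) (log_pos one_lt_two)
  rw [(hasDerivAt_throughput γ x).deriv]
  exact mul_neg_of_pos_of_neg (exp_pos _) (sub_neg.2 ((one_lt_div hγ).2 hx_gt))

theorem throughput_le_mul_exp_neg_mul {γ x : ℝ} (hγ : 0 < γ) (hx : 0 ≤ x) :
    throughput γ x ≤ x * exp (-(log 2 / γ) * x) := by
  have h2 : 1 + log 2 * x ≤ (2 : ℝ) ^ x := by
    rw [rpow_def_of_pos two_pos]
    linarith [add_one_le_exp (log 2 * x)]
  unfold throughput
  gcongr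
  rw [neg_mul, div_mul_eq_mul_div, ← neg_div, div_le_div_iff_of_pos_right hγ]
  linarith

theorem tendsto_throughput_atTop {γ : ℝ} (hγ : 0 < γ) :
    Tendsto (throughput γ) atTop (𝓝 0) := by
  have hbound : Tendsto (fun x => x * exp (-(log 2 / γ) * x)) atTop (𝓝 0) := by
    simpa only [rpow_one] using
      tendsto_rpow_mul_exp_neg_mul_atTop_nhds_zero 1 _ (div_pos (log_pos one_lt_two) hγ)
  refine tendsto_of_tendsto_of_tendsto_of_le_of_le' tendsto_const_nhds hbound ?_ ?_
  · filter_upwards [eventually_ge_atTop 0] with x hx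
    exact mul_nonneg hx (exp_pos _).le
  · filter_upwards [eventually_ge_atTop 0] with x hx
    exact throughput_le_mul_exp_neg_mul hγ hx

/-- For `γ̄_b > 0` and `0 < Γ` strictly below the maximum of `x exp((1-2^x)/γ̄_b)` over
`x ≥ 0`, the equation `x exp((1-2^x)/γ̄_b) = Γ` has exactly two positive solutions. -/
theorem stmt_7 (γb Γ : ℝ) (hγb : 0 < γb) (hΓ : 0 < Γ)
    (hΓmax : Γ < sSup {y : ℝ | ∃ x : ℝ, 0 ≤ x ∧ y = x * Real.exp ((1 - (2 : ℝ) ^ x) / γb)}) :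
    ∃ xmin xmax : ℝ, 0 < xmin ∧ xmin < xmax ∧
      xmin * Real.exp ((1 - (2 : ℝ) ^ xmin) / γb) = Γ ∧
      xmax * Real.exp ((1 - (2 : ℝ) ^ xmax) / γb) = Γ ∧
      ∀ x : ℝ, 0 < x → x * Real.exp ((1 - (2 : ℝ) ^ x) / γb) = Γ →
        x = xmin ∨ x = xmax := by
  obtain ⟨m, hm, hpeak⟩ := exists_pos_log_two_mul_mul_two_rpow_eq hγb
  have hmono := strictMonoOn_throughput hγb hpeak
  have hanti := strictAntiOn_throughput hγb hpeak hm.le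
  have hsup : sSup {y | ∃ x, 0 ≤ x ∧ y = throughput γb x} = throughput γb m :=
    (isGreatest_of_monotoneOn_of_antitoneOn hm.le hmono.monotoneOn hanti.antitoneOn).csSup_eq
  have h0 : throughput γb 0 = 0 := by simp [throughput]
  obtain ⟨a, b, ha, hab, hfa, hfb, huniq⟩ := exists_two_eq_of_strictMonoOn_of_strictAntiOn
    (continuous_throughput γb).continuousOn hm.le hmono hanti (by rwa [h0]) (hsup ▸ hΓmax)
    ((tendsto_throughput_atTop hγb).eventually (gt_mem_nhds hΓ))
  exact ⟨a, b, ha, hab, hfa, hfb, fun x hx => huniq x hx.le⟩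
end

section
/- For x > 0, the exponential integral satisfies the Abramowitz–Stegun bounds: (1/2)·e^{−x}·ln(1 + 2/x) ≤ −Ei(−x) ≤ e^{−x}·ln(1 + 1/x), where Ei(−x) = −∫_x^∞ e^{−t}/t dt. -/
open Real MeasureTheory Filter Topology Set

/-!
For `c > 0` the function `-(e^{-t} log(1 + c/t) / c)` has the positive derivative
`e^{-t} (log(1 + c/t) / c + 1/(t(t + c)))` and tends to `0` at infinity, so the integral of that
derivative over `(x, ∞)` is `e^{-x} log(1 + c/x) / c`. Comparing the bracket with `1/t`:
for `c = 1` it dominates `1/t` because `log(1 + 1/t) ≥ 1/(t + 1)`, and for `c = 2` it is dominated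
by `1/t` because `log y ≤ sinh (log y) = (y - y⁻¹)/2` for `y = 1 + 2/t ≥ 1`.
-/

theorem log_le_sub_inv_div_two {y : ℝ} (hy : 1 ≤ y) : log y ≤ (y - y⁻¹) / 2 := by
  rw [← sinh_log (by positivity)]
  exact self_le_sinh_iff.mpr (log_nonneg hy)

theorem inv_le_log_one_add_inv_add {t : ℝ} (ht : 0 < t) :
    1 / t ≤ log (1 + 1 / t) + 1 / (t * (t + 1)) := by
  have h := one_sub_inv_le_log_of_pos (x := 1 + 1 / t) (by positivity)
  have h' : 1 - (1 + 1 / t)⁻¹ + 1 / (t * (t + 1)) = 1 / t := by field_simp; ring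
  linarith

theorem log_one_add_two_div_add_le_inv {t : ℝ} (ht : 0 < t) :
    log (1 + 2 / t) / 2 + 1 / (t * (t + 2)) ≤ 1 / t := by
  have h := log_le_sub_inv_div_two (y := 1 + 2 / t) (by linarith [div_pos two_pos ht])
  have h' : (1 + 2 / t - (1 + 2 / t)⁻¹) / 2 / 2 + 1 / (t * (t + 2)) = 1 / t := by
    field_simp; ring
  linarith

section Primitive

variable {c : ℝ}

theorem hasDerivAt_exp_neg_mul_log_one_add_div (hc : 0 < c) {t : ℝ} (ht : 0 < t) :
    HasDerivAt (fun s => -(exp (-s) * log (1 + c / s) / c))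
      (exp (-t) * (log (1 + c / t) / c + 1 / (t * (t + c)))) t := by
  have hq : HasDerivAt (fun s => 1 + c / s) (-(c / t ^ 2)) t := by
    simpa [div_eq_mul_inv] using ((hasDerivAt_inv ht.ne').const_mul c).const_add 1
  refine ((((hasDerivAt_neg t).exp).mul (hq.log (by positivity))).div_const c).neg.congr_deriv ?_
  field_simp
  ring

theorem tendsto_exp_neg_mul_log_one_add_div :
    Tendsto (fun s => -(exp (-s) * log (1 + c / s) / c)) atTop (𝓝 0) := by
  have hlog : Tendsto (fun s => log (1 + c / s)) atTop (𝓝 (log (1 + 0))) :=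
    ((tendsto_const_nhds.div_atTop tendsto_id).const_add 1).log (by norm_num)
  simpa using ((tendsto_exp_neg_atTop_nhds_zero.mul hlog).div_const c).neg

theorem integral_Ioi_deriv_exp_neg_mul_log_one_add_div (hc : 0 < c) {x : ℝ} (hx : 0 < x) :
    IntegrableOn (fun t => exp (-t) * (log (1 + c / t) / c + 1 / (t * (t + c)))) (Ioi x) ∧
    ∫ t in Ioi x, exp (-t) * (log (1 + c / t) / c + 1 / (t * (t + c)))
      = exp (-x) * log (1 + c / x) / c := by
  have hderiv : ∀ t ∈ Ici x, HasDerivAt (fun s => -(exp (-s) * log (1 + c / s) / c))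
      (exp (-t) * (log (1 + c / t) / c + 1 / (t * (t + c)))) t :=
    fun t ht => hasDerivAt_exp_neg_mul_log_one_add_div hc (hx.trans_le ht)
  have hnonneg : ∀ t ∈ Ioi x, 0 ≤ exp (-t) * (log (1 + c / t) / c + 1 / (t * (t + c))) := by
    intro t ht
    have ht₀ : 0 < t := hx.trans ht
    have : 0 ≤ log (1 + c / t) := log_nonneg (by linarith [div_pos hc ht₀])
    positivity
  have hlim := tendsto_exp_neg_mul_log_one_add_div (c := c)
  refine ⟨integrableOn_Ioi_deriv_of_nonneg' hderiv hnonneg hlim, ?_⟩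
  rw [integral_Ioi_of_hasDerivAt_of_nonneg' hderiv hnonneg hlim]
  ring

end Primitive

/-- Abramowitz–Stegun bounds for the exponential integral: for `x > 0`,
`(1/2) e^{-x} ln(1 + 2/x) ≤ -Ei(-x) ≤ e^{-x} ln(1 + 1/x)`, where
`-Ei(-x) = ∫_x^∞ e^{-t}/t dt`. -/
theorem stmt_11 (x : ℝ) (hx : 0 < x)
    (negEi : ℝ → ℝ)
    (hEi : ∀ u : ℝ, 0 < u → negEi u = ∫ t in Set.Ioi u, Real.exp (-t) / t) :
    (1 / 2) * Real.exp (-x) * Real.log (1 + 2 / x) ≤ negEi x ∧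
    negEi x ≤ Real.exp (-x) * Real.log (1 + 1 / x) := by
  obtain ⟨hint₁, hval₁⟩ := integral_Ioi_deriv_exp_neg_mul_log_one_add_div one_pos hx
  obtain ⟨hint₂, hval₂⟩ := integral_Ioi_deriv_exp_neg_mul_log_one_add_div two_pos hx
  have hupper : ∀ t ∈ Ioi x,
      exp (-t) / t ≤ exp (-t) * (log (1 + 1 / t) / 1 + 1 / (t * (t + 1))) := fun t ht => by
      rw [div_one, div_eq_mul_one_div]
      exact mul_le_mul_of_nonneg_left (inv_le_log_one_add_inv_add (hx.trans ht)) (exp_pos _).le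
  have hlower : ∀ t ∈ Ioi x,
      exp (-t) * (log (1 + 2 / t) / 2 + 1 / (t * (t + 2))) ≤ exp (-t) / t := fun t ht => by
      rw [div_eq_mul_one_div (exp _)]
      exact mul_le_mul_of_nonneg_left (log_one_add_two_div_add_le_inv (hx.trans ht)) (exp_pos _).le
  have hint : IntegrableOn (fun t => exp (-t) / t) (Ioi x) := by
    have hcont : ContinuousOn (fun t => exp (-t) / t) (Ioi x) :=
      (by fun_prop : Continuous fun t => exp (-t)).continuousOn.div continuousOn_id
        fun t ht => (hx.trans ht).ne'
    refine hint₁.mono' (hcont.aestronglyMeasurable measurableSet_Ioi) ?_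
    filter_upwards [ae_restrict_mem measurableSet_Ioi] with t ht
    rw [norm_of_nonneg (div_pos (exp_pos _) (hx.trans ht)).le]
    exact hupper t ht
  rw [hEi x hx]
  constructor
  · linarith [setIntegral_mono_on hint₂ hint measurableSet_Ioi hlower]
  · linarith [setIntegral_mono_on hint hint₁ measurableSet_Ioi hupper]
end

section
/- Let γ̄_e > 0 and R_s > 0 be fixed. The average information leakage rate R_L(R_b) = (1/ln 2)·exp(1/γ̄_e)·(Ei(−2^{R_b}/γ̄_e) − Ei(−2^{R_b − R_s}/γ̄_e)) is strictly decreasing in R_b on (0, ∞). -/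
set_option maxHeartbeats 1000000

open Real MeasureTheory

lemma f_integrableOn {x : ℝ} (hx : 0 < x) :
    IntegrableOn (fun t => Real.exp (-t) / t) (Set.Ioi x) := by
  have h : IntegrableOn (fun t : ℝ => Real.exp (-1 * t)) (Set.Ioi x) :=
    exp_neg_integrableOn_Ioi x one_pos
  have hg : IntegrableOn (fun t : ℝ => x⁻¹ * Real.exp (-1 * t)) (Set.Ioi x) :=
    h.const_mul _
  have hmeas : AEStronglyMeasurable (fun t : ℝ => Real.exp (-t) / t)
      ((volume : Measure ℝ).restrict (Set.Ioi x)) := by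
    have hcont : ContinuousOn (fun t : ℝ => Real.exp (-t) / t) (Set.Ioi x) := by
      apply ContinuousOn.div (by fun_prop) continuousOn_id
      intro t ht
      exact ne_of_gt (hx.trans ht)
    exact hcont.aestronglyMeasurable measurableSet_Ioi
  apply MeasureTheory.Integrable.mono' hg hmeas
  filter_upwards [self_mem_ae_restrict measurableSet_Ioi] with t ht
  have htx : x < t := ht
  have ht0 : 0 < t := hx.trans htx
  have hexp : 0 < Real.exp (-t) := Real.exp_pos _
  rw [Real.norm_eq_abs, abs_of_nonneg (by positivity), neg_one_mul, div_le_iff₀ ht0]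
  calc Real.exp (-t) = x⁻¹ * Real.exp (-t) * x := by field_simp
  _ ≤ x⁻¹ * Real.exp (-t) * t := by
      apply mul_le_mul_of_nonneg_left htx.le (by positivity)

lemma split_integral {x y : ℝ} (hx : 0 < x) (hxy : x ≤ y) :
    ∫ t in Set.Ioi x, Real.exp (-t) / t =
      (∫ t in x..y, Real.exp (-t) / t) + ∫ t in Set.Ioi y, Real.exp (-t) / t := by
  rw [intervalIntegral.integral_of_le hxy]
  rw [← MeasureTheory.setIntegral_union (Set.Ioc_disjoint_Ioi le_rfl) measurableSet_Ioi
    ((f_integrableOn hx).mono_set Set.Ioc_subset_Ioi_self)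
    ((f_integrableOn (hx.trans_le hxy)))]
  rw [Set.Ioc_union_Ioi_eq_Ioi hxy]

/-- For fixed `R_s > 0`, the average information leakage rate
`R_L(R_b) = (1/ln 2) e^{1/γ̄ₑ} (Ei(-2^{R_b}/γ̄ₑ) - Ei(-2^{R_b-R_s}/γ̄ₑ))`
is strictly decreasing in `R_b` on `(0, ∞)`. -/
theorem stmt_13 (γe Rs : ℝ) (hγe : 0 < γe) (hRs : 0 < Rs)
    (Ei : ℝ → ℝ)
    (hEi : ∀ z : ℝ, z < 0 → Ei z = -∫ t in Set.Ioi (-z), Real.exp (-t) / t)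
    (RL : ℝ → ℝ)
    (hRL : ∀ Rb, RL Rb = (1 / Real.log 2) * Real.exp (1 / γe) *
      (Ei (-((2 : ℝ) ^ Rb) / γe) - Ei (-((2 : ℝ) ^ (Rb - Rs)) / γe))) :
    ∀ Rb₁ Rb₂ : ℝ, 0 < Rb₁ → Rb₁ < Rb₂ → RL Rb₂ < RL Rb₁ := by
  intro Rb₁ Rb₂ h1 h12
  set c : ℝ := (2 : ℝ) ^ (-Rs) with hc
  have hc0 : 0 < c := Real.rpow_pos_of_pos two_pos _
  have hc1 : c < 1 := Real.rpow_lt_one_of_one_lt_of_neg one_lt_two (neg_neg_iff_pos.mpr hRs)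
  -- rewrite RL Rb as C * ∫ s in c..1, exp(-(u s))/s, with u = 2^Rb/γe
  have key : ∀ Rb : ℝ, RL Rb = (1 / Real.log 2) * Real.exp (1 / γe) *
      ∫ s in c..(1:ℝ), Real.exp (-((2:ℝ)^Rb / γe * s)) / s := by
    intro Rb
    set u : ℝ := (2:ℝ)^Rb / γe with hu
    have hu0 : 0 < u := div_pos (Real.rpow_pos_of_pos two_pos _) hγe
    have hA : -((2 : ℝ) ^ Rb) / γe < 0 := by
      have := Real.rpow_pos_of_pos two_pos Rb
      rw [neg_div]; linarith [div_pos this hγe]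
    have hB : -((2 : ℝ) ^ (Rb - Rs)) / γe < 0 := by
      have := Real.rpow_pos_of_pos two_pos (Rb - Rs)
      rw [neg_div]; linarith [div_pos this hγe]
    have hBA : (2:ℝ) ^ (Rb - Rs) / γe = c * u := by
      rw [hu, hc, show Rb - Rs = -Rs + Rb by ring, Real.rpow_add two_pos]
      ring
    have e1 : -(-((2 : ℝ) ^ Rb) / γe) = u := by rw [hu]; ring
    have e2 : -(-((2 : ℝ) ^ (Rb - Rs)) / γe) = c * u := by rw [← hBA]; ring
    rw [hRL, hEi _ hA, hEi _ hB, e1, e2]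
    have hcu : 0 < c * u := mul_pos hc0 hu0
    have hcuu : c * u ≤ u := by nlinarith
    have hsplit := split_integral hcu hcuu
    have hdiff : (-∫ t in Set.Ioi u, Real.exp (-t) / t) -
        (-∫ t in Set.Ioi (c*u), Real.exp (-t) / t) = ∫ t in (c*u)..u, Real.exp (-t) / t := by
      linarith
    rw [hdiff]
    congr 1
    -- substitution t = u * s
    have hsub := intervalIntegral.smul_integral_comp_mul_left
      (fun t => Real.exp (-t) / t) u (a := c) (b := 1)
    rw [mul_one, mul_comm u c] at hsub
    rw [← hsub]
    rw [smul_eq_mul, ← intervalIntegral.integral_const_mul]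
    apply intervalIntegral.integral_congr
    intro s hs
    have hs0 : 0 < s := by
      rcases Set.mem_uIcc.mp hs with h | h
      · exact lt_of_lt_of_le hc0 h.1
      · linarith [h.1]
    have : -(u * s) = -(u*s) := rfl
    field_simp
  rw [key Rb₁, key Rb₂]
  have hC : 0 < (1 / Real.log 2) * Real.exp (1 / γe) := by
    have := Real.log_pos one_lt_two
    positivity
  apply mul_lt_mul_of_pos_left _ hC
  -- integrand strictly smaller for Rb₂
  set u₁ : ℝ := (2:ℝ)^Rb₁ / γe
  set u₂ : ℝ := (2:ℝ)^Rb₂ / γe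
  have hu1 : 0 < u₁ := div_pos (Real.rpow_pos_of_pos two_pos _) hγe
  have hu12 : u₁ < u₂ :=
    (div_lt_div_iff_of_pos_right hγe).mpr ((Real.rpow_lt_rpow_left_iff one_lt_two).mpr h12)
  have hcont : ∀ u : ℝ, ContinuousOn (fun s => Real.exp (-(u * s)) / s) (Set.Icc c 1) := by
    intro u
    refine ContinuousOn.div (by fun_prop) continuousOn_id ?_
    intro s hs
    exact ne_of_gt (lt_of_lt_of_le hc0 hs.1)
  apply intervalIntegral.integral_lt_integral_of_continuousOn_of_le_of_exists_lt hc1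
    (hcont u₂) (hcont u₁)
  · intro s hs
    have hs0 : 0 < s := hc0.trans hs.1
    have hexp : Real.exp (-(u₂ * s)) ≤ Real.exp (-(u₁ * s)) :=
      Real.exp_le_exp.mpr (by nlinarith)
    exact (div_le_div_iff_of_pos_right hs0).mpr hexp
  · refine ⟨1, Set.right_mem_Icc.mpr hc1.le, ?_⟩
    simp only [mul_one, div_one]
    exact Real.exp_lt_exp.mpr (by linarith)
end

section
/- Let ξ, A > 0 with ξ·A < 1. The function R_{b1,min}(ξ) = −log₂(1 − ξ·A) is strictly increasing in ξ on (0, 1/A), and for fixed γ̄_b > 0 the function R_{b1,0}(ξ) = log₂((exp(W₀(ξ·A·γ̄_b)) − 1)/(ξ·A)) is strictly decreasing in ξ on (0, 1/A). -/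
/- Writing `w = W₀(t γ)`, so that `t = w eʷ / γ`, the quotient `(eʷ - 1) / t` equals
`γ (1 - e⁻ʷ) / w`, which is `γ` times the slope of the secant of `exp` through `-w` and `0`.
Since `exp` is strictly convex this slope strictly decreases as `w` grows, and `w` grows with `t`. -/

open Real Set

theorem one_sub_exp_neg_div_strictAntiOn :
    StrictAntiOn (fun w : ℝ => (1 - exp (-w)) / w) (Ioi 0) := by
  intro w₁ hw₁ w₂ hw₂ hw
  have hw₁ : (0 : ℝ) < w₁ := hw₁
  have hw₂ : (0 : ℝ) < w₂ := hw₂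
  have h := strictConvexOn_exp.secant_strict_mono (mem_univ 0) (mem_univ (-w₂))
    (mem_univ (-w₁)) (by linarith) (by linarith) (neg_lt_neg hw)
  simp only [exp_zero, sub_zero] at h
  rwa [← neg_div_neg_eq, neg_neg, neg_sub, ← neg_div_neg_eq (exp (-w₁) - 1), neg_neg,
    neg_sub] at h

section LambertW

variable {W : ℝ → ℝ} (hW : ∀ t : ℝ, 0 ≤ t → 0 ≤ W t ∧ W t * exp (W t) = t)
include hW

theorem lambertW_pos {t : ℝ} (ht : 0 < t) : 0 < W t := by
  obtain ⟨hnonneg, heq⟩ := hW t ht.le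
  refine hnonneg.lt_of_ne fun h => ?_
  rw [← h, zero_mul] at heq
  exact ht.ne heq

theorem lambertW_strictMonoOn : StrictMonoOn W (Ici 0) := by
  intro t₁ ht₁ t₂ ht₂ ht
  obtain ⟨hw₁, he₁⟩ := hW t₁ ht₁
  obtain ⟨-, he₂⟩ := hW t₂ ht₂
  by_contra! hle
  have : W t₂ * exp (W t₂) ≤ W t₁ * exp (W t₁) :=
    mul_le_mul hle (exp_le_exp.2 hle) (exp_pos _).le hw₁
  linarith

theorem exp_lambertW_sub_one_div_eq {t γ : ℝ} (ht : 0 < t) (hγ : 0 < γ) :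
    (exp (W (t * γ)) - 1) / t = γ * ((1 - exp (-W (t * γ))) / W (t * γ)) := by
  have hw := lambertW_pos hW (mul_pos ht hγ)
  have he := (hW _ (mul_pos ht hγ).le).2
  rw [exp_neg]
  field_simp
  linear_combination (exp (W (t * γ)) - 1) * he

theorem exp_lambertW_sub_one_div_strictAntiOn {γ : ℝ} (hγ : 0 < γ) :
    StrictAntiOn (fun t => (exp (W (t * γ)) - 1) / t) (Ioi 0) := by
  intro t₁ ht₁ t₂ ht₂ ht
  have ht₁ : (0 : ℝ) < t₁ := ht₁
  have ht₂ : (0 : ℝ) < t₂ := ht₂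
  have hw : W (t₁ * γ) < W (t₂ * γ) :=
    lambertW_strictMonoOn hW (mem_Ici.2 (by positivity)) (mem_Ici.2 (by positivity))
      (mul_lt_mul_of_pos_right ht hγ)
  simp only [exp_lambertW_sub_one_div_eq hW ht₁ hγ, exp_lambertW_sub_one_div_eq hW ht₂ hγ]
  exact mul_lt_mul_of_pos_left (one_sub_exp_neg_div_strictAntiOn
    (lambertW_pos hW (mul_pos ht₁ hγ)) (lambertW_pos hW (mul_pos ht₂ hγ)) hw) hγ

end LambertW

/-- For `0 < ξ A < 1`: `R_{b1,min}(ξ) = -log₂(1 - ξ A)` is strictly increasing in `ξ`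
on `(0, 1/A)`, and for `γ̄_b > 0`,
`R_{b1,0}(ξ) = log₂((e^{W₀(ξ A γ̄_b)} - 1)/(ξ A))` is strictly decreasing in `ξ`
on `(0, 1/A)`.  `W₀` is characterized by `W t ≥ 0` and `W t · e^{W t} = t` for `t ≥ 0`. -/
theorem stmt_14 (A γb : ℝ) (hA : 0 < A) (hγb : 0 < γb)
    (W : ℝ → ℝ) (hW : ∀ t : ℝ, 0 ≤ t → 0 ≤ W t ∧ W t * Real.exp (W t) = t) :
    (∀ ξ₁ ξ₂ : ℝ, 0 < ξ₁ → ξ₁ < ξ₂ → ξ₂ * A < 1 →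
      -Real.logb 2 (1 - ξ₁ * A) < -Real.logb 2 (1 - ξ₂ * A)) ∧
    (∀ ξ₁ ξ₂ : ℝ, 0 < ξ₁ → ξ₁ < ξ₂ → ξ₂ * A < 1 →
      Real.logb 2 ((Real.exp (W (ξ₂ * A * γb)) - 1) / (ξ₂ * A)) <
        Real.logb 2 ((Real.exp (W (ξ₁ * A * γb)) - 1) / (ξ₁ * A))) := by
  refine ⟨fun ξ₁ ξ₂ _ hξ hξ₂ => ?_, fun ξ₁ ξ₂ hξ₁ hξ _ => ?_⟩
  · have hA' : ξ₁ * A < ξ₂ * A := mul_lt_mul_of_pos_right hξ hA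
    exact neg_lt_neg (logb_lt_logb one_lt_two (by linarith) (by linarith))
  · have ht₁ : 0 < ξ₁ * A := mul_pos hξ₁ hA
    have ht₂ : 0 < ξ₂ * A := mul_pos (hξ₁.trans hξ) hA
    have hw₂ := lambertW_pos hW (mul_pos ht₂ hγb)
    have hpos : 0 < (exp (W (ξ₂ * A * γb)) - 1) / (ξ₂ * A) :=
      div_pos (sub_pos.2 (one_lt_exp_iff.2 hw₂)) ht₂
    exact logb_lt_logb one_lt_two hpos (exp_lambertW_sub_one_div_strictAntiOn hW hγb ht₁ ht₂
      (mul_lt_mul_of_pos_right hξ hA))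
end
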